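/- For every integer C ≥ 2, every C-class confusion matrix M with Σ_j m_ji/n_j > 0 for each i satisfies 0 ≤ κ̂_a(M) ≤ 1, and for every C both bounds are attained: κ̂_a(M) = 1 for any diagonal confusion matrix with m_ii = n_i for all i, and κ̂_a(M) = 0 for any confusion matrix with all diagonal entries equal to 0 and Σ_j m_ji/n_j > 0 for each i. Hence the lower and upper bounds of mAURPC-OVA do not depend on the number of classes C. -/

import Mathlib

open Finset

/-- The mAURPC-OVA index `κ̂_a` of a `C`-class confusion matrix `m`, where
`n_i` is the `i`-th row sum. -/
noncomputable def mkappaOVA (C : ℕ) (m : Fin C → Fin C → ℕ) : ℝ :=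
  (1 / (2 * (C : ℝ))) *
    ∑ i, (((m i i : ℝ) / (∑ j, (m i j : ℝ))) /
        (∑ j, (m j i : ℝ) / (∑ l, (m j l : ℝ)))
      + (m i i : ℝ) / (∑ j, (m i j : ℝ)))

/-
Each class contributes `r_i / S_i + r_i` with recall `r_i = m_ii / n_i` and `S_i = Σ_j m_ji / n_j`.
Since `m_ii` is a summand of `n_i` and `r_i` is a summand of `S_i`, we have
`0 ≤ r_i ≤ 1` and `r_i ≤ S_i`, so every contribution lies in `[0, 2]` and their mean, halved,
lies in `[0, 1]`. A diagonal matrix has `r_i = S_i = 1`, a zero diagonal has `r_i = 0`.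
-/

section Mean

variable {ι : Type*} [Fintype ι]

lemma one_div_two_mul_card_mul_sum_le_one {t : ι → ℝ} (ht : ∀ i, t i ≤ 2) :
    1 / (2 * (Fintype.card ι : ℝ)) * ∑ i, t i ≤ 1 := by
  rcases (Fintype.card ι).eq_zero_or_pos with hcard | hcard
  · simp [hcard]
  rw [one_div, inv_mul_le_iff₀ (by positivity), mul_one]
  simpa [mul_comm] using sum_le_card_nsmul univ t 2 fun i _ => ht i

lemma one_div_two_mul_card_mul_sum_two [Nonempty ι] :
    1 / (2 * (Fintype.card ι : ℝ)) * ∑ _i : ι, (2 : ℝ) = 1 := by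
  have : (Fintype.card ι : ℝ) ≠ 0 := by positivity
  simp only [sum_const, card_univ, nsmul_eq_mul]
  field_simp

end Mean

section ConfusionMatrix

variable {ι : Type*} [Fintype ι] (m : ι → ι → ℕ)

noncomputable def classRecall (i : ι) : ℝ := (m i i : ℝ) / ∑ j, (m i j : ℝ)

/-- `Σ_j m_ji / n_j`, the `i`-th column sum of the row-normalised confusion matrix. -/
noncomputable def normalizedColSum (i : ι) : ℝ := ∑ j, (m j i : ℝ) / ∑ l, (m j l : ℝ)

noncomputable def ovaScore (i : ι) : ℝ :=
  classRecall m i / normalizedColSum m i + classRecall m i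

lemma classRecall_nonneg (i : ι) : 0 ≤ classRecall m i := by
  unfold classRecall; positivity

lemma classRecall_le_one (i : ι) : classRecall m i ≤ 1 :=
  div_le_one_of_le₀ (single_le_sum (f := fun j => (m i j : ℝ)) (fun _ _ => by positivity)
    (mem_univ i)) (by positivity)

lemma classRecall_le_normalizedColSum (i : ι) : classRecall m i ≤ normalizedColSum m i :=
  single_le_sum (f := fun j => (m j i : ℝ) / ∑ l, (m j l : ℝ)) (fun _ _ => by positivity)
    (mem_univ i)

lemma ovaScore_nonneg (i : ι) : 0 ≤ ovaScore m i := by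
  have := classRecall_nonneg m i
  have : 0 ≤ normalizedColSum m i := this.trans (classRecall_le_normalizedColSum m i)
  unfold ovaScore; positivity

lemma ovaScore_le_two (i : ι) : ovaScore m i ≤ 2 := by
  have hS : classRecall m i / normalizedColSum m i ≤ 1 :=
    div_le_one_of_le₀ (classRecall_le_normalizedColSum m i)
      ((classRecall_nonneg m i).trans (classRecall_le_normalizedColSum m i))
  have := classRecall_le_one m i
  unfold ovaScore; linarith

variable {m}

lemma classRecall_eq_one_of_isDiag (hdiag : ∀ i j, i ≠ j → m i j = 0) {i : ι}
    (hn : 0 < ∑ j, m i j) : classRecall m i = 1 := by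
  have hrow : ∑ j, (m i j : ℝ) = m i i := by
    rw [sum_eq_single i (fun j _ hj => by simp [hdiag i j (Ne.symm hj)]) (by simp)]
  have : (m i i : ℝ) ≠ 0 := by rw [← hrow]; exact_mod_cast hn.ne'
  rw [classRecall, hrow, div_self this]

lemma normalizedColSum_eq_classRecall_of_isDiag (hdiag : ∀ i j, i ≠ j → m i j = 0) (i : ι) :
    normalizedColSum m i = classRecall m i :=
  sum_eq_single i (fun j _ hj => by simp [hdiag j i hj]) (by simp)

lemma ovaScore_eq_two_of_isDiag (hdiag : ∀ i j, i ≠ j → m i j = 0) {i : ι}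
    (hn : 0 < ∑ j, m i j) : ovaScore m i = 2 := by
  rw [ovaScore, normalizedColSum_eq_classRecall_of_isDiag hdiag,
    classRecall_eq_one_of_isDiag hdiag hn]
  norm_num

lemma ovaScore_eq_zero_of_diag_eq_zero {i : ι} (hi : m i i = 0) : ovaScore m i = 0 := by
  simp [ovaScore, classRecall, hi]

end ConfusionMatrix

lemma mkappaOVA_eq {C : ℕ} (m : Fin C → Fin C → ℕ) :
    mkappaOVA C m = 1 / (2 * (Fintype.card (Fin C) : ℝ)) * ∑ i, ovaScore m i := by
  rw [Fintype.card_fin]; rfl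

/-- For every `C ≥ 2`, every `C`-class confusion matrix with
`Σ_j m_ji/n_j > 0` for each `i` satisfies `0 ≤ κ̂_a(M) ≤ 1`; any diagonal confusion
matrix attains `1`, and any confusion matrix with zero diagonal and
`Σ_j m_ji/n_j > 0` for each `i` attains `0`. Hence the bounds of mAURPC-OVA do not
depend on the number of classes. -/
theorem mkappaOVA_bounds (C : ℕ) (hC : 2 ≤ C) :
    (∀ m : Fin C → Fin C → ℕ, (∀ i, 0 < ∑ j, m i j) →
      (∀ i, 0 < ∑ j, (m j i : ℝ) / (∑ l, (m j l : ℝ))) →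
      0 ≤ mkappaOVA C m ∧ mkappaOVA C m ≤ 1) ∧
    (∀ m : Fin C → Fin C → ℕ, (∀ i, 0 < ∑ j, m i j) →
      (∀ i j, i ≠ j → m i j = 0) → mkappaOVA C m = 1) ∧
    (∀ m : Fin C → Fin C → ℕ, (∀ i, 0 < ∑ j, m i j) →
      (∀ i, 0 < ∑ j, (m j i : ℝ) / (∑ l, (m j l : ℝ))) →
      (∀ i, m i i = 0) → mkappaOVA C m = 0) := by
  refine ⟨fun m _ _ => ?_, fun m hn hdiag => ?_, fun m _ _ hzero => ?_⟩
  · rw [mkappaOVA_eq]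
    exact ⟨mul_nonneg (by positivity) (sum_nonneg fun i _ => ovaScore_nonneg m i),
      one_div_two_mul_card_mul_sum_le_one (ovaScore_le_two m)⟩
  · have : Nonempty (Fin C) := ⟨⟨0, by omega⟩⟩
    rw [mkappaOVA_eq]
    simp only [ovaScore_eq_two_of_isDiag hdiag (hn _)]
    exact one_div_two_mul_card_mul_sum_two
  · simp [mkappaOVA_eq, ovaScore_eq_zero_of_diag_eq_zero (hzero _)]
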